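/- arXiv:2304.09932 — 3 statements merged into one kernel-verified Lean document; each statement's English description precedes it below -/
import Mathlib

section
/- Let C ⊆ ℝ^m be a nonempty closed convex set with 0 ∈ C and v ∈ ℝ^m. If there exists r' > 0 with dist(r'·v, C) > 0, then dist(r·v, C) → +∞ as r → +∞. -/
/-! Because `C` is star-shaped about `0`, the ratio `dist (r • v, C) / r` is nondecreasing in
`r > 0`; once it is positive, `dist (r • v, C)` grows at least linearly in `r`. -/

open Metric Set Filter
open scoped Pointwise

theorem StarConvex.infDist_smul_le {E : Type*} [NormedAddCommGroup E] [NormedSpace ℝ E]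
    {C : Set E} (hC : StarConvex ℝ 0 C) {t : ℝ} (ht₀ : 0 < t) (ht₁ : t ≤ 1) (x : E) :
    infDist (t • x) C ≤ t * infDist x C := by
  rcases C.eq_empty_or_nonempty with rfl | hne
  · simp
  have hsub : t • C ⊆ C := by
    rintro _ ⟨y, hy, rfl⟩
    exact hC.smul_mem hy ht₀.le ht₁
  calc infDist (t • x) C ≤ infDist (t • x) (t • C) := infDist_le_infDist_of_subset hsub hne.smul_set
    _ = t * infDist x C := by rw [infDist_smul₀ ht₀.ne', Real.norm_of_nonneg ht₀.le]

theorem StarConvex.monotoneOn_infDist_smul_div {E : Type*} [NormedAddCommGroup E]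
    [NormedSpace ℝ E] {C : Set E} (hC : StarConvex ℝ 0 C) (v : E) :
    MonotoneOn (fun r : ℝ => infDist (r • v) C / r) (Ioi 0) := by
  intro s (hs : 0 < s) r (hr : 0 < r) hsr
  have h := hC.infDist_smul_le (div_pos hs hr) (div_le_one_of_le₀ hsr hr.le) (r • v)
  rw [smul_smul, div_mul_cancel₀ s hr.ne', div_mul_eq_mul_div, le_div_iff₀ hr] at h
  rw [div_le_div_iff₀ hs hr]
  linarith

theorem stmt1_general {m : ℕ} (C : Set (EuclideanSpace ℝ (Fin m)))
    (hconv : Convex ℝ C)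
    (h0 : (0 : EuclideanSpace ℝ (Fin m)) ∈ C)
    (v : EuclideanSpace ℝ (Fin m))
    (hfin : ∃ r' > (0 : ℝ), 0 < infDist (r' • v) C) :
    Tendsto (fun r : ℝ => infDist (r • v) C) atTop atTop := by
  obtain ⟨r', hr', hd⟩ := hfin
  have hmono := (hconv.starConvex h0).monotoneOn_infDist_smul_div v
  refine tendsto_atTop_mono' _ ?_ (tendsto_id.atTop_mul_const (div_pos hd hr'))
  filter_upwards [eventually_ge_atTop r'] with r hr
  have hr₀ : 0 < r := hr'.trans_le hr
  calc r * (infDist (r' • v) C / r') ≤ r * (infDist (r • v) C / r) :=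
        mul_le_mul_of_nonneg_left (hmono hr' hr₀ hr) hr₀.le
    _ = infDist (r • v) C := mul_div_cancel₀ _ hr₀.ne'

theorem stmt1 {m : ℕ} (C : Set (EuclideanSpace ℝ (Fin m)))
    (hne : C.Nonempty) (hcl : IsClosed C) (hconv : Convex ℝ C)
    (h0 : (0 : EuclideanSpace ℝ (Fin m)) ∈ C)
    (v : EuclideanSpace ℝ (Fin m))
    (hfin : ∃ r' > (0 : ℝ), 0 < infDist (r' • v) C) :
    Tendsto (fun r : ℝ => infDist (r • v) C) atTop atTop :=
  stmt1_general C hconv h0 v hfin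
end

section
/- Let C ⊆ ℝ^m be a nonempty closed convex set such that r·𝔹 ⊆ C for some r > 0, where 𝔹 is the closed unit ball. Then for every z ∈ ℝ^m, ⟨z − P_C(z), z⟩ ≥ r·dist(z, C), where P_C(z) is the metric projection of z onto C. -/
/-!
Testing the projection inequality `⟪z - p, w - p⟫ ≤ 0` at the point `w = r • (z - p) / ‖z - p‖`
of the ball `r • 𝔹 ⊆ C` gives `r ‖z - p‖ ≤ ⟪z - p, p⟫`, and
`⟪z - p, z⟫ = ⟪z - p, p⟫ + ‖z - p‖²`.
-/

open Metric Set

open scoped RealInnerProductSpace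

section InnerProductSpace

variable {E : Type*} [NormedAddCommGroup E] [InnerProductSpace ℝ E]

theorem exists_mem_closedBall_inner_eq_mul_norm (v : E) {r : ℝ} (hr : 0 ≤ r) :
    ∃ w ∈ closedBall (0 : E) r, ⟪v, w⟫ = r * ‖v‖ := by
  refine ⟨(r / ‖v‖) • v, ?_, ?_⟩
  · rw [mem_closedBall_zero_iff, norm_smul, Real.norm_of_nonneg (by positivity)]
    rcases eq_or_ne ‖v‖ 0 with hv | hv
    · simpa [hv] using hr
    · rw [div_mul_cancel₀ r hv]
  · rw [real_inner_smul_right, real_inner_self_eq_norm_sq]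
    rcases eq_or_ne ‖v‖ 0 with hv | hv
    · simp [hv]
    · field_simp

theorem mul_norm_sub_le_inner_of_closedBall_subset {C : Set E} {r : ℝ} (hr : 0 ≤ r)
    (hball : closedBall (0 : E) r ⊆ C) {z p : E} (hproj : ∀ w ∈ C, ⟪z - p, w - p⟫ ≤ 0) :
    r * ‖z - p‖ ≤ ⟪z - p, z⟫ := by
  obtain ⟨w, hw, hzw⟩ := exists_mem_closedBall_inner_eq_mul_norm (z - p) hr
  have hwp : ⟪z - p, w⟫ ≤ ⟪z - p, p⟫ := by
    simpa [inner_sub_right] using hproj w (hball hw)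
  calc r * ‖z - p‖ = ⟪z - p, w⟫ := hzw.symm
    _ ≤ ⟪z - p, p⟫ + ‖z - p‖ ^ 2 := by linarith [sq_nonneg ‖z - p‖]
    _ = ⟪z - p, z⟫ := by
      rw [← real_inner_self_eq_norm_sq, ← inner_add_right, add_sub_cancel]

end InnerProductSpace

theorem stmt3_general {m : ℕ} (C : Set (EuclideanSpace ℝ (Fin m)))
    (hconv : Convex ℝ C)
    (r : ℝ) (hr : 0 < r) (hball : Metric.closedBall (0 : EuclideanSpace ℝ (Fin m)) r ⊆ C) :
    ∀ z p : EuclideanSpace ℝ (Fin m), p ∈ C → dist z p = infDist z C →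
      r * infDist z C ≤ (inner ℝ (z - p) z : ℝ) := by
  intro z p hp hd
  have hdist : infDist z C = ‖z - p‖ := by rw [← hd, dist_eq_norm]
  have hmin : ‖z - p‖ = ⨅ w : C, ‖z - w‖ := by
    simpa only [hdist, dist_eq_norm] using infDist_eq_iInf (x := z) (s := C)
  rw [hdist]
  exact mul_norm_sub_le_inner_of_closedBall_subset hr.le hball
    ((norm_eq_iInf_iff_real_inner_le_zero hconv hp).mp hmin)

theorem stmt3 {m : ℕ} (C : Set (EuclideanSpace ℝ (Fin m)))
    (hne : C.Nonempty) (hcl : IsClosed C) (hconv : Convex ℝ C)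
    (r : ℝ) (hr : 0 < r) (hball : Metric.closedBall (0 : EuclideanSpace ℝ (Fin m)) r ⊆ C) :
    ∀ z p : EuclideanSpace ℝ (Fin m), p ∈ C → dist z p = infDist z C →
      r * infDist z C ≤ (inner ℝ (z - p) z : ℝ) :=
  stmt3_general C hconv r hr hball
end

section
/- Let C ⊆ ℝ^m be a nonempty closed convex set with 0 ∈ C, v a finite direction (i.e., dist(r'v, C) > 0 for some r' > 0), and ε > 0. Then ρ^ε := sup{r > 0 : dist(rv, C) ≤ ε} is the unique r > 0 satisfying dist(r·v, C) = ε. -/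
open Metric Set

lemma aux_scale {E : Type*} [NormedAddCommGroup E] [NormedSpace ℝ E] [ProperSpace E]
    (C : Set E) (hne : C.Nonempty) (hcl : IsClosed C) (hconv : Convex ℝ C)
    (h0 : (0 : E) ∈ C) (v : E) {a b : ℝ} (ha : 0 ≤ a) (hab : a ≤ b) (hb : 0 < b) :
    infDist (a • v) C ≤ (a / b) * infDist (b • v) C := by
  obtain ⟨p, hp, hpd⟩ := hcl.exists_infDist_eq_dist hne (b • v)
  have hθ0 : 0 ≤ a / b := div_nonneg ha hb.le
  have hθ1 : a / b ≤ 1 := (div_le_one hb).2 hab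
  have hmem : (a / b) • p ∈ C := by
    have := hconv hp h0 (b := 1 - a / b) hθ0 (by linarith) (by ring)
    simpa using this
  have hle : infDist (a • v) C ≤ dist (a • v) ((a / b) • p) :=
    infDist_le_dist_of_mem hmem
  have heq : a • v = (a / b) • (b • v) := by
    rw [smul_smul, div_mul_cancel₀ _ hb.ne']
  calc infDist (a • v) C ≤ dist (a • v) ((a / b) • p) := hle
    _ = (a / b) * dist (b • v) p := by
        rw [heq, dist_smul₀, Real.norm_of_nonneg hθ0]
    _ = (a / b) * infDist (b • v) C := by rw [hpd]

theorem stmt8 {m : ℕ} (C : Set (EuclideanSpace ℝ (Fin m)))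
    (hne : C.Nonempty) (hcl : IsClosed C) (hconv : Convex ℝ C)
    (h0 : (0 : EuclideanSpace ℝ (Fin m)) ∈ C)
    (v : EuclideanSpace ℝ (Fin m))
    (hfin : ∃ r' > (0 : ℝ), 0 < infDist (r' • v) C)
    (ε : ℝ) (hε : 0 < ε)
    (ρε : ℝ) (hρε : ρε = sSup {r : ℝ | 0 < r ∧ infDist (r • v) C ≤ ε}) :
    (0 < ρε ∧ infDist (ρε • v) C = ε) ∧
    ∀ r : ℝ, 0 < r → infDist (r • v) C = ε → r = ρε := by
  set f : ℝ → ℝ := fun r => infDist (r • v) C with hf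
  have hfc : Continuous f := (continuous_infDist_pt C).comp (continuous_id.smul continuous_const)
  obtain ⟨r', hr', hfr'⟩ := hfin
  set S : Set ℝ := {r : ℝ | 0 < r ∧ infDist (r • v) C ≤ ε} with hS
  -- S nonempty
  have hδpos : 0 < min 1 (ε / (‖v‖ + 1)) := by
    have : 0 < ‖v‖ + 1 := by positivity
    exact lt_min one_pos (div_pos hε this)
  set δ : ℝ := min 1 (ε / (‖v‖ + 1)) with hδ
  have hδS : δ ∈ S := by
    constructor
    · exact hδpos
    · have h1 : infDist (δ • v) C ≤ dist (δ • v) 0 := infDist_le_dist_of_mem h0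
      have h2 : dist (δ • v) (0 : EuclideanSpace ℝ (Fin m)) = δ * ‖v‖ := by
        rw [dist_zero_right, norm_smul, Real.norm_of_nonneg hδpos.le]
      have h3 : δ * ‖v‖ ≤ (ε / (‖v‖ + 1)) * ‖v‖ := by
        apply mul_le_mul_of_nonneg_right (min_le_right _ _) (norm_nonneg _)
      have h4 : (ε / (‖v‖ + 1)) * ‖v‖ ≤ ε := by
        rw [div_mul_eq_mul_div, div_le_iff₀ (by positivity)]
        nlinarith [norm_nonneg v]
      linarith
  have hSne : S.Nonempty := ⟨δ, hδS⟩
  -- S bounded above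
  have hbdd : BddAbove S := by
    refine ⟨max r' (r' * ε / f r'), fun r hr => ?_⟩
    rcases le_or_gt r r' with h | h
    · exact le_trans h (le_max_left _ _)
    · have := aux_scale C hne hcl hconv h0 v hr'.le h.le (hr'.trans h)
      -- f r' ≤ (r'/r) * f r
      have hrpos : 0 < r := hr'.trans h
      have : f r' * r ≤ r' * f r := by
        rw [div_mul_eq_mul_div, le_div_iff₀ hrpos] at this
        linarith [this]
      have hfr : f r ≤ ε := hr.2
      have : f r' * r ≤ r' * ε := by nlinarith [hr'.le]
      have : r ≤ r' * ε / f r' := by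
        rw [le_div_iff₀ hfr']; linarith [this]
      exact le_trans this (le_max_right _ _)
  have hρpos : 0 < ρε := by
    rw [hρε]; exact lt_of_lt_of_le hδpos (le_csSup hbdd hδS)
  -- f ρε ≤ ε
  have hclosed : IsClosed {r : ℝ | f r ≤ ε} := isClosed_le hfc continuous_const
  have hsub : S ⊆ {r : ℝ | f r ≤ ε} := fun r hr => hr.2
  have hρmem : ρε ∈ closure S := by rw [hρε]; exact csSup_mem_closure hSne hbdd
  have hle : f ρε ≤ ε :=
    (hclosed.closure_subset_iff.2 hsub) hρmem
  -- f ρε ≥ ε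
  have hge : ε ≤ f ρε := by
    by_contra hlt
    push_neg at hlt
    have hev : ∀ᶠ r in nhds ρε, f r < ε := (hfc.continuousAt).eventually_lt
      continuousAt_const hlt
    rw [Metric.eventually_nhds_iff] at hev
    obtain ⟨t, ht, hball⟩ := hev
    have hmem : ρε + t / 2 ∈ S := by
      constructor
      · linarith
      · exact (hball (by rw [Real.dist_eq, show ρε + t / 2 - ρε = t / 2 by ring,
          abs_of_pos (by linarith)]; linarith)).le
    have h2 : ρε + t / 2 ≤ sSup S := le_csSup hbdd hmem
    rw [← hρε] at h2
    linarith
  have hfρ : f ρε = ε := le_antisymm hle hge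
  refine ⟨⟨hρpos, hfρ⟩, fun r hr hfr => ?_⟩
  have hfr2 : f r = ε := hfr
  by_contra hne'
  rcases lt_or_gt_of_ne hne' with h | h
  · -- r < ρε : f r ≤ (r/ρε) * f ρε < ε
    have := aux_scale C hne hcl hconv h0 v hr.le h.le hρpos
    have hlt : (r / ρε) * f ρε < ε := by
      rw [hfρ]
      have : r / ρε < 1 := (div_lt_one hρpos).2 h
      nlinarith
    have : f r < ε := lt_of_le_of_lt this hlt
    linarith [hfr2 ▸ this]
  · -- ρε < r : f ρε ≤ (ρε/r) * f r < ε
    have := aux_scale C hne hcl hconv h0 v hρpos.le h.le (hρpos.trans h)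
    have hlt : (ρε / r) * f r < ε := by
      rw [hfr2]
      have : ρε / r < 1 := (div_lt_one (hρpos.trans h)).2 h
      nlinarith
    have : f ρε < ε := lt_of_le_of_lt this hlt
    linarith [hfρ ▸ this]
end
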